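/- arXiv:2402.03559 — 8 statements merged into one kernel-verified Lean document; each statement's English description precedes it below -/
import Mathlib

section
/- Let n ≥ 1, let C be a nonempty closed convex subset of EuclideanSpace ℝ (Fin n), let σ > 0, let 0 < γ ≤ σ², and set c = γ/σ². Suppose x ∈ EuclideanSpace ℝ (Fin n) satisfies ‖(1-c)·x‖ ≤ ⨅_{y ∈ C} ‖(1-c)·y‖ (the paper's condition (8) that the gradient step from x lands at least as close to the optimum 0 as the closest point reachable by a single gradient step from any point of C). Let p be the metric projection of x onto C, and let ε be distributed according to the standard Gaussian measure on ℝⁿ (the product of n standard real Gaussians). Then ∫ infDist((1-c)·x + √(2γ)·ε, C)² dε ≥ ∫ infDist((1-c)·p + √(2γ)·ε, C)² dε; that is, the expected cost of projection after applying the update operator to x is at least the expected cost of projection after applying the update operator to P_C(x). (Theorem 1 of the paper, instantiated with the Gaussian score.) -/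
/-!
Write `u = (1 - c) • x` and `v = (1 - c) • p`. Because `p` is the projection of `x` onto `C` and
condition (8) at `y = p` gives `‖u‖ ≤ ‖v‖`, every point of `C` is at least as close to `v` as to
`u`. Testing against a point of `C` nearest to `u + w` then gives, for every displacement `w`,
`infDist (v + w) C ^ 2 ≤ infDist (u + w) C ^ 2 - 2 ⟪u - v, w⟫`, and the linear term has expectation
zero under the centred Gaussian noise `w = √(2γ) • ε`.
-/

open MeasureTheory Metric ProbabilityTheory
open scoped InnerProductSpace

section Geometry

variable {E : Type*} [NormedAddCommGroup E] [InnerProductSpace ℝ E]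

lemma dist_smul_le_dist_smul_of_inner_sub_nonpos {x p y : E} {s : ℝ} (hs₀ : 0 ≤ s)
    (hs₁ : s ≤ 1) (hxp : ‖s • x‖ ≤ ‖s • p‖) (hy : ⟪x - p, y - p⟫_ℝ ≤ 0) :
    dist y (s • p) ≤ dist y (s • x) := by
  have hshrink : s * (‖x‖ ^ 2 - ‖p‖ ^ 2) ≤ s ^ 2 * (‖x‖ ^ 2 - ‖p‖ ^ 2) := by
    rcases hs₀.eq_or_lt with rfl | hs
    · simp
    have hxp' : ‖x‖ ^ 2 ≤ ‖p‖ ^ 2 := by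
      gcongr
      simpa only [norm_smul, Real.norm_of_nonneg hs₀, mul_le_mul_iff_right₀ hs] using hxp
    nlinarith [mul_nonneg (mul_nonneg hs₀ (sub_nonneg.2 hs₁)) (sub_nonneg.2 hxp')]
  have hinner : 2 * ⟪x - p, y⟫_ℝ ≤ ‖x‖ ^ 2 - ‖p‖ ^ 2 := by
    have hxp_sq := norm_sub_sq_real x p
    rw [inner_sub_right, inner_sub_left, inner_sub_left, real_inner_self_eq_norm_sq] at hy
    rw [inner_sub_left]
    nlinarith [sq_nonneg ‖x - p‖]
  rw [dist_eq_norm, dist_eq_norm, ← sq_le_sq₀ (norm_nonneg _) (norm_nonneg _),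
    norm_sub_sq_real, norm_sub_sq_real, norm_smul, norm_smul, real_inner_smul_right,
    real_inner_smul_right, Real.norm_of_nonneg hs₀]
  rw [inner_sub_left] at hinner
  rw [real_inner_comm p y, real_inner_comm x y]
  nlinarith [mul_le_mul_of_nonneg_left hinner hs₀]

lemma infDist_add_sq_le_of_forall_dist_le [ProperSpace E] {C : Set E} (hC : IsClosed C)
    (hne : C.Nonempty) {u v : E} (huv : ∀ y ∈ C, dist y v ≤ dist y u) (w : E) :
    infDist (v + w) C ^ 2 ≤ infDist (u + w) C ^ 2 - 2 * ⟪u - v, w⟫_ℝ := by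
  obtain ⟨y, hyC, hy⟩ := hC.exists_infDist_eq_dist hne (u + w)
  have hsq : ∀ z, dist (z + w) y ^ 2 = dist z y ^ 2 + 2 * ⟪z - y, w⟫_ℝ + ‖w‖ ^ 2 := fun z => by
    rw [dist_eq_norm, dist_eq_norm, add_sub_right_comm, norm_add_sq_real]
  have hvu : dist v y ^ 2 ≤ dist u y ^ 2 := by
    rw [dist_comm v, dist_comm u]
    exact pow_le_pow_left₀ dist_nonneg (huv y hyC) 2
  calc infDist (v + w) C ^ 2 ≤ dist (v + w) y ^ 2 :=
        pow_le_pow_left₀ infDist_nonneg (infDist_le_dist_of_mem hyC) 2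
    _ ≤ dist (u + w) y ^ 2 - 2 * ⟪u - v, w⟫_ℝ := by
        rw [hsq, hsq, show u - y = (u - v) + (v - y) by abel, inner_add_left]
        linarith
    _ = infDist (u + w) C ^ 2 - 2 * ⟪u - v, w⟫_ℝ := by rw [hy]

end Geometry

section Integration

variable {E : Type*} [NormedAddCommGroup E] [MeasurableSpace E] [BorelSpace E]
  {μ : Measure E} [IsFiniteMeasure μ]

lemma integrable_infDist_add_smul_sq [NormedSpace ℝ E] (hμ : MemLp id 2 μ) (C : Set E)
    (z : E) (τ : ℝ) : Integrable (fun ε => infDist (z + τ • ε) C ^ 2) μ := by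
  have hcont : Continuous fun ε : E => infDist (z + τ • ε) C :=
    (continuous_infDist_pt C).comp (by fun_prop)
  refine MemLp.integrable_sq <| ((memLp_const (infDist z C)).add (hμ.norm.const_mul |τ|)).of_le
    hcont.aestronglyMeasurable (Filter.Eventually.of_forall fun ε => ?_)
  have hle : infDist (z + τ • ε) C ≤ infDist z C + |τ| * ‖ε‖ := by
    simpa [dist_eq_norm, norm_smul] using
      infDist_le_infDist_add_dist (x := z + τ • ε) (y := z) (s := C)
  simp only [Pi.add_apply, id, Real.norm_eq_abs]
  rw [abs_of_nonneg infDist_nonneg, abs_of_nonneg (add_nonneg infDist_nonneg (by positivity))]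
  exact hle

lemma integral_infDist_add_smul_sq_le [InnerProductSpace ℝ E] [ProperSpace E]
    (hμ : MemLp id 2 μ) (hmean : ∫ ε, ε ∂μ = 0) {C : Set E} (hC : IsClosed C)
    (hne : C.Nonempty) {u v : E} (huv : ∀ y ∈ C, dist y v ≤ dist y u) (τ : ℝ) :
    ∫ ε, infDist (v + τ • ε) C ^ 2 ∂μ ≤ ∫ ε, infDist (u + τ • ε) C ^ 2 ∂μ := by
  have hint : Integrable (fun ε : E => τ • ε) μ := (hμ.integrable one_le_two).smul τ
  have hlin : Integrable (fun ε => ⟪u - v, τ • ε⟫_ℝ) μ := hint.const_inner (u - v)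
  have hcentred : ∫ ε, ⟪u - v, τ • ε⟫_ℝ ∂μ = 0 := by
    rw [integral_inner hint, integral_smul]
    simp [hmean]
  calc ∫ ε, infDist (v + τ • ε) C ^ 2 ∂μ
      ≤ ∫ ε, (infDist (u + τ • ε) C ^ 2 - 2 * ⟪u - v, τ • ε⟫_ℝ) ∂μ :=
        integral_mono (integrable_infDist_add_smul_sq hμ C v τ)
          ((integrable_infDist_add_smul_sq hμ C u τ).sub (hlin.const_mul 2))
          fun ε => infDist_add_sq_le_of_forall_dist_le hC hne huv (τ • ε)
    _ = ∫ ε, infDist (u + τ • ε) C ^ 2 ∂μ := by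
        rw [integral_sub (integrable_infDist_add_smul_sq hμ C u τ) (hlin.const_mul 2),
          integral_const_mul, hcentred, mul_zero, sub_zero]

end Integration

theorem stmt0_general (n : ℕ) (C : Set (EuclideanSpace ℝ (Fin n)))
    (hCcl : IsClosed C) (hCcv : Convex ℝ C)
    (σ γ : ℝ) (hγ : 0 < γ) (hγσ : γ ≤ σ ^ 2)
    (c : ℝ) (hc : c = γ / σ ^ 2)
    (x p : EuclideanSpace ℝ (Fin n))
    (hx : ‖(1 - c) • x‖ ≤ ⨅ y : C, ‖(1 - c) • (y : EuclideanSpace ℝ (Fin n))‖)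
    (hpC : p ∈ C) (hpd : dist x p = infDist x C) :
    ∫ ε, infDist ((1 - c) • x + Real.sqrt (2 * γ) • ε) C ^ 2
        ∂(Measure.map (MeasurableEquiv.toLp 2 (Fin n → ℝ))
            (Measure.pi fun _ : Fin n => gaussianReal 0 1)) ≥
      ∫ ε, infDist ((1 - c) • p + Real.sqrt (2 * γ) • ε) C ^ 2
        ∂(Measure.map (MeasurableEquiv.toLp 2 (Fin n → ℝ))
            (Measure.pi fun _ : Fin n => gaussianReal 0 1)) := by
  rw [MeasurableEquiv.coe_toLp, map_pi_eq_stdGaussian, ge_iff_le]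
  have hc₀ : 0 ≤ c := hc ▸ by positivity
  have hc₁ : c ≤ 1 := hc ▸ div_le_one_of_le₀ hγσ (sq_nonneg σ)
  have hbdd : BddBelow (Set.range fun y : C => ‖(1 - c) • (y : EuclideanSpace ℝ (Fin n))‖) :=
    ⟨0, by rintro _ ⟨y, rfl⟩; exact norm_nonneg _⟩
  have hxp : ‖(1 - c) • x‖ ≤ ‖(1 - c) • p‖ := hx.trans (ciInf_le hbdd ⟨p, hpC⟩)
  have hproj : ∀ y ∈ C, ⟪x - p, y - p⟫_ℝ ≤ 0 := by
    refine (norm_eq_iInf_iff_real_inner_le_zero hCcv hpC).1 ?_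
    simp only [← dist_eq_norm, hpd, infDist_eq_iInf]
  exact integral_infDist_add_smul_sq_le IsGaussian.memLp_two_id integral_id_stdGaussian hCcl
    ⟨p, hpC⟩ (fun y hy => dist_smul_le_dist_smul_of_inner_sub_nonpos (by linarith) (by linarith)
      hxp (hproj y hy)) _

/-- Theorem 1 of the paper (expectation form, Gaussian score, Euclidean space):
if the gradient step from `x` lands at least as close to the optimum `0` as the
closest point reachable by a single gradient step from any point of `C`, then
the expected projection cost after one noisy PGDM update from `x` is at least
that after the same update from the metric projection `p` of `x` onto `C`. -/
theorem stmt0 (n : ℕ) (hn : 1 ≤ n) (C : Set (EuclideanSpace ℝ (Fin n)))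
    (hCne : C.Nonempty) (hCcl : IsClosed C) (hCcv : Convex ℝ C)
    (σ γ : ℝ) (hσ : 0 < σ) (hγ : 0 < γ) (hγσ : γ ≤ σ ^ 2)
    (c : ℝ) (hc : c = γ / σ ^ 2)
    (x p : EuclideanSpace ℝ (Fin n))
    (hx : ‖(1 - c) • x‖ ≤ ⨅ y : C, ‖(1 - c) • (y : EuclideanSpace ℝ (Fin n))‖)
    (hpC : p ∈ C) (hpd : dist x p = infDist x C) :
    ∫ ε, infDist ((1 - c) • x + Real.sqrt (2 * γ) • ε) C ^ 2
        ∂(Measure.map (MeasurableEquiv.toLp 2 (Fin n → ℝ))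
            (Measure.pi fun _ : Fin n => gaussianReal 0 1)) ≥
      ∫ ε, infDist ((1 - c) • p + Real.sqrt (2 * γ) • ε) C ^ 2
        ∂(Measure.map (MeasurableEquiv.toLp 2 (Fin n → ℝ))
            (Measure.pi fun _ : Fin n => gaussianReal 0 1)) :=
  stmt0_general n C hCcl hCcv σ γ hγ hγσ c hc x p hx hpC hpd
end

section
/- Let E be a real inner product space that is complete, let C ⊆ E be a nonempty closed convex set, let c ∈ [0, 1], and let x ∈ E satisfy ‖x‖ ≤ infDist(0, C). Let p = P_C(x) be the metric projection of x onto C. Then infDist((1-c)·x, C) ≥ infDist((1-c)·p, C); in fact the chain infDist((1-c)·x, C) ≥ c·infDist(0, C) ≥ infDist((1-c)·p, C) holds. (Deterministic core of Theorem 1: a gradient step from the projected point incurs no larger projection cost than a gradient step from the unprojected point.) -/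
open Metric

/-- Deterministic core of Theorem 1: in a real Hilbert space, if `x` satisfies
`‖x‖ ≤ infDist 0 C` and `p` is the metric projection of `x` onto the nonempty
closed convex set `C`, then the gradient step from the projected point incurs no
larger projection cost, via the chain
`infDist ((1-c)•x) C ≥ c • infDist 0 C ≥ infDist ((1-c)•p) C`. -/
theorem stmt1 {E : Type*} [NormedAddCommGroup E] [InnerProductSpace ℝ E] [CompleteSpace E]
    (C : Set E) (hCne : C.Nonempty) (hCcl : IsClosed C) (hCcv : Convex ℝ C)
    (c : ℝ) (hc : c ∈ Set.Icc (0 : ℝ) 1)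
    (x p : E) (hx : ‖x‖ ≤ infDist 0 C)
    (hpC : p ∈ C) (hpd : dist x p = infDist x C) :
    infDist ((1 - c) • x) C ≥ infDist ((1 - c) • p) C ∧
      infDist ((1 - c) • x) C ≥ c * infDist 0 C ∧
      c * infDist 0 C ≥ infDist ((1 - c) • p) C := by
  obtain ⟨hc0, hc1⟩ := hc
  set d := infDist 0 C with hd
  have hd0 : 0 ≤ d := infDist_nonneg
  -- lower bound: infDist ((1-c)•x) C ≥ c * d
  have hlow : c * d ≤ infDist ((1 - c) • x) C := by
    have : Nonempty C := hCne.to_subtype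
    rw [infDist_eq_iInf]
    refine le_ciInf fun yy => ?_
    obtain ⟨y, hy⟩ := yy
    have hy' : d ≤ ‖y‖ := by
      simpa [dist_zero_left] using infDist_le_dist_of_mem (x := (0 : E)) hy
    have h1 : ‖y‖ - ‖(1 - c) • x‖ ≤ dist ((1 - c) • x) y := by
      rw [dist_eq_norm]
      have := norm_sub_norm_le (y - (1 - c) • x) (-(1 - c) • x)
      calc ‖y‖ - ‖(1 - c) • x‖ ≤ ‖y - (1 - c) • x‖ := by
            have := abs_norm_sub_norm_le y ((1 - c) • x)
            linarith [abs_le.mp this]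
        _ = ‖(1 - c) • x - y‖ := norm_sub_rev _ _
    have h2 : ‖(1 - c) • x‖ ≤ (1 - c) * d := by
      rw [norm_smul, Real.norm_eq_abs, abs_of_nonneg (by linarith)]
      exact mul_le_mul_of_nonneg_left hx (by linarith)
    calc c * d = d - (1 - c) * d := by ring
      _ ≤ ‖y‖ - ‖(1 - c) • x‖ := by linarith
      _ ≤ dist ((1 - c) • x) y := h1
  -- upper bound: infDist ((1-c)•p) C ≤ c * d
  have hup : infDist ((1 - c) • p) C ≤ c * d := by
    refine le_of_forall_pos_le_add fun ε hε => ?_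
    obtain ⟨q, hqC, hq⟩ := (infDist_lt_iff hCne).mp
      (show infDist 0 C < d + ε by linarith)
    have hqn : ‖q‖ < d + ε := by simpa [dist_zero_left] using hq
    have hz : (1 - c) • p + c • q ∈ C := hCcv hpC hqC (by linarith) hc0 (by ring)
    have := infDist_le_dist_of_mem (x := (1 - c) • p) hz
    have hdist : dist ((1 - c) • p) ((1 - c) • p + c • q) = c * ‖q‖ := by
      rw [dist_eq_norm]
      simp [norm_smul, abs_of_nonneg hc0]
    rw [hdist] at this
    have : infDist ((1 - c) • p) C ≤ c * (d + ε) := by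
      refine this.trans ?_
      exact mul_le_mul_of_nonneg_left hqn.le hc0
    nlinarith
  exact ⟨le_trans hup hlow, hlow, hup⟩
end

section
/- Let E be a real normed vector space, let C ⊆ E be a nonempty convex set, let σ > 0, let γ > 0, and set c = γ/σ². For every p ∈ C with c ≤ 1 and every ε ∈ E, infDist((1-c)·p + √(2γ)·ε, C) ≤ c·infDist(0, C) + √(2γ)·‖ε‖. Consequently the cost of projection satisfies Error(U(p), C) ≤ (c·infDist(0, C) + √(2γ)·‖ε‖)². (Quantitative bound on the projection cost after one PGDM update applied to a feasible point, underlying Corollary 1.) -/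
open Metric

/-- Quantitative bound on the projection cost after one PGDM update applied to a
feasible point: for `p ∈ C` with `c = γ/σ² ≤ 1` and any noise `ε`,
`infDist ((1-c)•p + √(2γ)•ε) C ≤ c * infDist 0 C + √(2γ) * ‖ε‖`, hence the cost
`Error(U(p), C) = infDist(U(p), C)²` is at most `(c * infDist 0 C + √(2γ)*‖ε‖)²`. -/
theorem stmt7 {E : Type*} [NormedAddCommGroup E] [NormedSpace ℝ E]
    (C : Set E) (hCne : C.Nonempty) (hCcv : Convex ℝ C)
    (σ γ : ℝ) (hσ : 0 < σ) (hγ : 0 < γ)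
    (c : ℝ) (hc : c = γ / σ ^ 2) (hc1 : c ≤ 1)
    (p : E) (hpC : p ∈ C) (ε : E) :
    infDist ((1 - c) • p + Real.sqrt (2 * γ) • ε) C ≤
        c * infDist 0 C + Real.sqrt (2 * γ) * ‖ε‖ ∧
      infDist ((1 - c) • p + Real.sqrt (2 * γ) • ε) C ^ 2 ≤
        (c * infDist 0 C + Real.sqrt (2 * γ) * ‖ε‖) ^ 2 := by
  have hcpos : 0 < c := by
    rw [hc]; positivity
  have key : infDist ((1 - c) • p) C ≤ c * infDist 0 C := by
    rw [← div_le_iff₀' hcpos]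
    by_contra h
    push_neg at h
    rw [infDist_lt_iff hCne] at h
    obtain ⟨q, hq, hlt⟩ := h
    rw [lt_div_iff₀' hcpos] at hlt
    refine absurd hlt (not_lt.2 ?_)
    have hmem : (1 - c) • p + c • q ∈ C := by
      exact hCcv hpC hq (by linarith) hcpos.le (by ring)
    calc infDist ((1 - c) • p) C ≤ dist ((1 - c) • p) ((1 - c) • p + c • q) :=
          infDist_le_dist_of_mem hmem
      _ = c * dist 0 q := by
          rw [dist_eq_norm, dist_eq_norm]
          simp [norm_smul, abs_of_pos hcpos]
  have h1 : infDist ((1 - c) • p + Real.sqrt (2 * γ) • ε) C ≤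
      c * infDist 0 C + Real.sqrt (2 * γ) * ‖ε‖ := by
    calc infDist ((1 - c) • p + Real.sqrt (2 * γ) • ε) C
        ≤ infDist ((1 - c) • p) C + dist ((1 - c) • p + Real.sqrt (2 * γ) • ε) ((1 - c) • p) :=
          infDist_le_infDist_add_dist
      _ ≤ c * infDist 0 C + Real.sqrt (2 * γ) * ‖ε‖ := by
          rw [dist_eq_norm]
          have : (1 - c) • p + Real.sqrt (2 * γ) • ε - (1 - c) • p = Real.sqrt (2 * γ) • ε := by
            abel
          rw [this, norm_smul, Real.norm_eq_abs, abs_of_nonneg (Real.sqrt_nonneg _)]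
          linarith [key]
  refine ⟨h1, ?_⟩
  exact pow_le_pow_left₀ (infDist_nonneg) h1 2
end

section
/- Let C ⊆ ℝ be a nonempty closed convex set, let σ > 0, and let p ∈ C. Then the map γ ↦ ∫ infDist((1 - γ/σ²)·p + √(2γ)·e, C)² d(gaussianReal 0 1)(e) tends to 0 as γ → 0⁺. (Expectation form of Corollary 1 in one dimension: the expected projection cost of the PGDM update applied to a feasible point vanishes as the step size vanishes.) -/
/-!
Since `p ∈ C`, the projection cost of a point `x` is at most `(x - p) ^ 2`. The update applied
to `p` differs from `p` by the affine Gaussian `-(γ / σ²) p + √(2γ) e`, whose second moment is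
`(γ p / σ²) ^ 2 + 2γ`, and this tends to `0` with `γ`.
-/

open MeasureTheory Metric ProbabilityTheory Filter

lemma integral_sq_gaussianReal (μ : ℝ) (v : NNReal) :
    ∫ x, x ^ 2 ∂gaussianReal μ v = μ ^ 2 + v := by
  have h := variance_eq_sub (memLp_id_gaussianReal (μ := μ) (v := v) 2)
  rw [variance_id_gaussianReal] at h
  simp only [id, Pi.pow_apply, integral_id_gaussianReal] at h
  linarith

lemma gaussianReal_map_affine (a b : ℝ) :
    (gaussianReal 0 1).map (fun e => a + b * e) = gaussianReal a (.mk (b ^ 2) (sq_nonneg b)) := by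
  have : (fun e : ℝ => a + b * e) = (a + ·) ∘ (b * ·) := rfl
  rw [this, ← Measure.map_map (by fun_prop) (by fun_prop), gaussianReal_map_const_mul,
    gaussianReal_map_const_add]
  simp

lemma integral_sq_affine_gaussianReal (a b : ℝ) :
    ∫ e, (a + b * e) ^ 2 ∂gaussianReal 0 1 = a ^ 2 + b ^ 2 := by
  rw [← integral_map (f := fun x : ℝ => x ^ 2) (by fun_prop) (by fun_prop),
    gaussianReal_map_affine, integral_sq_gaussianReal]
  rfl

lemma integrable_sq_affine_gaussianReal (a b : ℝ) :
    Integrable (fun e => (a + b * e) ^ 2) (gaussianReal 0 1) :=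
  ((memLp_const a).add ((memLp_id_gaussianReal 2).const_mul b)).integrable_sq

lemma integral_infDist_sq_le_integral_dist_sq {Ω α : Type*} [MeasurableSpace Ω]
    [PseudoMetricSpace α] {μ : Measure Ω} {X : Ω → α} {C : Set α} {p : α} (hp : p ∈ C)
    (hX : Integrable (fun ω => dist (X ω) p ^ 2) μ) :
    ∫ ω, infDist (X ω) C ^ 2 ∂μ ≤ ∫ ω, dist (X ω) p ^ 2 ∂μ :=
  integral_mono_of_nonneg (.of_forall fun _ => sq_nonneg _) hX
    (.of_forall fun _ => pow_le_pow_left₀ infDist_nonneg (infDist_le_dist_of_mem hp) 2)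

theorem stmt9_general (C : Set ℝ)
    (σ : ℝ) (p : ℝ) (hpC : p ∈ C) :
    Tendsto (fun γ : ℝ =>
        ∫ e, infDist ((1 - γ / σ ^ 2) * p + Real.sqrt (2 * γ) * e) C ^ 2
          ∂(gaussianReal 0 1))
      (nhdsWithin 0 (Set.Ioi 0)) (nhds 0) := by
  have hdist (γ e : ℝ) : dist ((1 - γ / σ ^ 2) * p + Real.sqrt (2 * γ) * e) p ^ 2
      = (-(γ / σ ^ 2 * p) + Real.sqrt (2 * γ) * e) ^ 2 := by
    rw [Real.dist_eq, sq_abs]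
    ring
  have hbound (γ : ℝ) (hγ : 0 ≤ γ) :
      ∫ e, infDist ((1 - γ / σ ^ 2) * p + Real.sqrt (2 * γ) * e) C ^ 2 ∂(gaussianReal 0 1)
        ≤ (γ / σ ^ 2 * p) ^ 2 + 2 * γ := by
    calc _ ≤ ∫ e, dist ((1 - γ / σ ^ 2) * p + Real.sqrt (2 * γ) * e) p ^ 2 ∂(gaussianReal 0 1) :=
          integral_infDist_sq_le_integral_dist_sq hpC
            (by simpa only [hdist] using integrable_sq_affine_gaussianReal _ _)
      _ = (γ / σ ^ 2 * p) ^ 2 + 2 * γ := by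
          simp_rw [hdist]
          rw [integral_sq_affine_gaussianReal, neg_sq, Real.sq_sqrt (by positivity)]
  have hlim : Tendsto (fun γ : ℝ => (γ / σ ^ 2 * p) ^ 2 + 2 * γ) (nhdsWithin 0 (Set.Ioi 0))
      (nhds 0) := by
    have : Continuous fun γ : ℝ => (γ / σ ^ 2 * p) ^ 2 + 2 * γ := by fun_prop
    simpa using (this.tendsto 0).mono_left nhdsWithin_le_nhds
  refine tendsto_of_tendsto_of_tendsto_of_le_of_le' tendsto_const_nhds hlim
    (.of_forall fun γ => integral_nonneg fun e => sq_nonneg _) ?_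
  filter_upwards [self_mem_nhdsWithin] with γ hγ using hbound γ (le_of_lt hγ)

/-- Expectation form of Corollary 1 in one dimension: for a nonempty closed convex
set `C ⊆ ℝ` and a feasible point `p ∈ C`, the expected projection cost of the PGDM
update applied to `p`, with standard Gaussian noise, vanishes as the step size
`γ` tends to `0` from above. -/
theorem stmt9 (C : Set ℝ) (hCne : C.Nonempty) (hCcl : IsClosed C) (hCcv : Convex ℝ C)
    (σ : ℝ) (hσ : 0 < σ) (p : ℝ) (hpC : p ∈ C) :
    Tendsto (fun γ : ℝ =>
        ∫ e, infDist ((1 - γ / σ ^ 2) * p + Real.sqrt (2 * γ) * e) C ^ 2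
          ∂(gaussianReal 0 1))
      (nhdsWithin 0 (Set.Ioi 0)) (nhds 0) :=
  stmt9_general C σ p hpC
end

section
/- Let E be a real inner product space that is complete, let C ⊆ E be a nonempty closed convex set, and let c ∈ (0, 1). A point p ∈ C satisfies P_C((1-c)·p) = p if and only if ‖p‖ ≤ ‖y‖ for every y ∈ C; that is, the fixed points of the projected PGDM gradient step are exactly the minimum-norm points of C (the feasible points closest to the global optimum 0). (Fixed-point characterization underlying the claim that projected sampling steers samples to the point of maximum likelihood satisfying the constraints.) -/
/-!
By the variational inequality, `p ∈ C` is a point of `C` nearest to `x` iff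
`⟪x - p, y - p⟫ ≤ 0` for all `y ∈ C`, a condition that only depends on the ray from `p`
through `x`. Since `(1 - c) • p = p + c • (0 - p)` lies on the ray from `p` through `0`,
`p` is nearest to `(1 - c) • p` iff it is nearest to `0`, i.e. of minimal norm in `C`.
-/

section NearestPoint

variable {F : Type*} [NormedAddCommGroup F] [InnerProductSpace ℝ F] {K : Set F} {u v : F}

theorem forall_dist_le_iff_real_inner_le_zero (hK : Convex ℝ K) (hv : v ∈ K) :
    (∀ w ∈ K, dist u v ≤ dist u w) ↔ ∀ w ∈ K, inner ℝ (u - v) (w - v) ≤ 0 := by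
  have : Nonempty K := ⟨⟨v, hv⟩⟩
  have hbdd : BddBelow (Set.range fun w : K => ‖u - w‖) :=
    ⟨0, by rintro _ ⟨w, rfl⟩; positivity⟩
  rw [← norm_eq_iInf_iff_real_inner_le_zero hK hv, le_antisymm_iff, le_ciInf_iff hbdd,
    and_iff_left (ciInf_le hbdd ⟨v, hv⟩)]
  simp only [dist_eq_norm, Subtype.forall]

theorem forall_dist_add_smul_sub_le_iff {t : ℝ} (ht : 0 < t) (hK : Convex ℝ K) (hv : v ∈ K) :
    (∀ w ∈ K, dist (v + t • (u - v)) v ≤ dist (v + t • (u - v)) w) ↔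
      ∀ w ∈ K, dist u v ≤ dist u w := by
  rw [forall_dist_le_iff_real_inner_le_zero hK hv, forall_dist_le_iff_real_inner_le_zero hK hv]
  refine forall₂_congr fun w _ => ?_
  rw [add_sub_cancel_left, real_inner_smul_left, ← smul_eq_mul,
    smul_nonpos_iff_nonpos_of_pos_left ht]

end NearestPoint

theorem stmt13_general {E : Type*} [NormedAddCommGroup E] [InnerProductSpace ℝ E]
    (C : Set E) (hCcv : Convex ℝ C)
    (c : ℝ) (hc : c ∈ Set.Ioo (0 : ℝ) 1)
    (p : E) (hpC : p ∈ C) :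
    (∀ y ∈ C, dist ((1 - c) • p) p ≤ dist ((1 - c) • p) y) ↔ ∀ y ∈ C, ‖p‖ ≤ ‖y‖ := by
  have hray : (1 - c) • p = p + c • ((0 : E) - p) := by module
  rw [hray, forall_dist_add_smul_sub_le_iff hc.1 hCcv hpC]
  simp only [dist_zero_left]

/-- Fixed-point characterization of the projected PGDM gradient step: a feasible
point `p ∈ C` satisfies `P_C((1-c)•p) = p` (i.e., `p` is a nearest point of `C`
to `(1-c)•p`, which characterizes the unique metric projection for `C` nonempty
closed convex in a Hilbert space) if and only if `p` is a minimum-norm point of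
`C`. -/
theorem stmt13 {E : Type*} [NormedAddCommGroup E] [InnerProductSpace ℝ E] [CompleteSpace E]
    (C : Set E) (hCne : C.Nonempty) (hCcl : IsClosed C) (hCcv : Convex ℝ C)
    (c : ℝ) (hc : c ∈ Set.Ioo (0 : ℝ) 1)
    (p : E) (hpC : p ∈ C) :
    (∀ y ∈ C, dist ((1 - c) • p) p ≤ dist ((1 - c) • p) y) ↔ ∀ y ∈ C, ‖p‖ ≤ ‖y‖ :=
  stmt13_general C hCcv c hc p hpC
end

section
/- Let E be a real inner product space that is complete, let C ⊆ E be a nonempty closed convex set, and let c ∈ (0, 1). Let m be the unique minimum-norm point of C. Then for every x₀ ∈ E the projected iterates x_{n+1} = P_C((1-c)·x_n) satisfy ‖x_n − m‖ ≤ (1-c)ⁿ·‖x₀ − m‖ for all n, and hence converge to m. (Geometric convergence of the projected PGDM gradient steps to the constrained optimum for convex constraint sets, the convergence guarantee asserted in Section 4.1.) -/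
/-!
The minimum-norm point `m` is the projection of `0` onto `C`, hence also of `(1 - c) • m`, because
`(1 - c) • m - m = c • (0 - m)`. The projection onto a convex set is nonexpansive, so each step
shrinks the distance to `m` by the factor `1 - c` of the gradient step `x ↦ (1 - c) • x`.
-/

open Metric Filter
open scoped InnerProductSpace

section NearestPoint

variable {F : Type*} [NormedAddCommGroup F] [InnerProductSpace ℝ F]

theorem real_inner_sub_nonpos_of_forall_norm_sub_le {K : Set F} (hK : Convex ℝ K) {u v : F}
    (hv : v ∈ K) (h : ∀ w ∈ K, ‖u - v‖ ≤ ‖u - w‖) : ∀ w ∈ K, ⟪u - v, w - v⟫_ℝ ≤ 0 := by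
  have : Nonempty K := ⟨⟨v, hv⟩⟩
  refine (norm_eq_iInf_iff_real_inner_le_zero hK hv).mp (le_antisymm ?_ ?_)
  · exact le_ciInf fun w => h w w.2
  · exact ciInf_le ⟨0, by rintro r ⟨w, rfl⟩; positivity⟩ (⟨v, hv⟩ : K)

/-- Nonexpansiveness of the projection onto a convex set, phrased through the variational
inequalities that characterise `p` and `q` as the projections of `u` and `v`. -/
theorem norm_sub_le_of_real_inner_nonpos {u v p q : F} (hp : ⟪u - p, q - p⟫_ℝ ≤ 0)
    (hq : ⟪v - q, p - q⟫_ℝ ≤ 0) : ‖p - q‖ ≤ ‖u - v‖ := by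
  have hsq : ‖p - q‖ ^ 2 ≤ ⟪u - v, p - q⟫_ℝ := by
    have hsplit : u - v = (p - q) - (v - q) + (u - p) := by abel
    have hflip : ⟪u - p, p - q⟫_ℝ = -⟪u - p, q - p⟫_ℝ := by rw [← inner_neg_right, neg_sub]
    rw [hsplit, inner_add_left, inner_sub_left, real_inner_self_eq_norm_sq, hflip]
    linarith
  have hcs : ⟪u - v, p - q⟫_ℝ ≤ ‖u - v‖ * ‖p - q‖ := real_inner_le_norm _ _
  nlinarith [norm_nonneg (p - q), norm_nonneg (u - v)]

/-- A minimum-norm point `m` of a convex set is also its nearest point to `t • m` for `t ≤ 1`. -/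
theorem real_inner_smul_sub_self_nonpos_of_forall_norm_le {K : Set F} (hK : Convex ℝ K) {m : F}
    (hm : m ∈ K) (hmin : ∀ y ∈ K, ‖m‖ ≤ ‖y‖) {t : ℝ} (ht : t ≤ 1) :
    ∀ w ∈ K, ⟪t • m - m, w - m⟫_ℝ ≤ 0 := by
  have hzero : ∀ w ∈ K, ⟪0 - m, w - m⟫_ℝ ≤ 0 :=
    real_inner_sub_nonpos_of_forall_norm_sub_le hK hm fun y hy => by simpa using hmin y hy
  intro w hw
  have hsmul : t • m - m = (1 - t) • (0 - m) := by module
  rw [hsmul, real_inner_smul_left]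
  exact mul_nonpos_of_nonneg_of_nonpos (by linarith) (hzero w hw)

end NearestPoint

theorem stmt14_general {E : Type*} [NormedAddCommGroup E] [InnerProductSpace ℝ E]
    (C : Set E) (hCcv : Convex ℝ C)
    (c : ℝ) (hc : c ∈ Set.Ioo (0 : ℝ) 1)
    (m : E) (hmC : m ∈ C) (hm : ∀ y ∈ C, ‖m‖ ≤ ‖y‖)
    (x₀ : E) (x : ℕ → E) (hx0 : x 0 = x₀)
    (hxC : ∀ n, x (n + 1) ∈ C)
    (hxproj : ∀ n, ∀ y ∈ C, dist ((1 - c) • x n) (x (n + 1)) ≤ dist ((1 - c) • x n) y) :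
    (∀ n, ‖x n - m‖ ≤ (1 - c) ^ n * ‖x₀ - m‖) ∧ Tendsto x atTop (nhds m) := by
  obtain ⟨hc0, hc1⟩ := hc
  have hm_proj := real_inner_smul_sub_self_nonpos_of_forall_norm_le hCcv hmC hm
    (sub_le_self 1 hc0.le)
  have hstep (n : ℕ) : ‖x (n + 1) - m‖ ≤ (1 - c) * ‖x n - m‖ := by
    have hx_proj := real_inner_sub_nonpos_of_forall_norm_sub_le hCcv (hxC n)
      fun y hy => by simpa only [dist_eq_norm] using hxproj n y hy
    calc ‖x (n + 1) - m‖ ≤ ‖(1 - c) • x n - (1 - c) • m‖ :=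
          norm_sub_le_of_real_inner_nonpos (hx_proj m hmC) (hm_proj _ (hxC n))
      _ = (1 - c) * ‖x n - m‖ := by
          rw [← smul_sub, norm_smul, Real.norm_of_nonneg (sub_nonneg.mpr hc1.le)]
  have hbound (n : ℕ) : ‖x n - m‖ ≤ (1 - c) ^ n * ‖x₀ - m‖ :=
    hx0 ▸ le_geom (u := fun k => ‖x k - m‖) (sub_nonneg.mpr hc1.le) n fun k _ => hstep k
  refine ⟨hbound, tendsto_iff_norm_sub_tendsto_zero.mpr ?_⟩
  refine squeeze_zero (fun n => norm_nonneg _) hbound ?_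
  simpa using (tendsto_pow_atTop_nhds_zero_of_lt_one (sub_nonneg.mpr hc1.le)
    (sub_lt_self 1 hc0)).mul_const ‖x₀ - m‖

/-- Geometric convergence of the projected PGDM gradient steps: if `m` is the
minimum-norm point of the nonempty closed convex set `C` and the iterates satisfy
`x_{n+1} = P_C((1-c)•x_n)` (i.e., `x_{n+1}` is a nearest point of `C` to
`(1-c)•x_n`), then `‖x_n − m‖ ≤ (1-c)ⁿ·‖x₀ − m‖` for all `n`, and `x_n → m`. -/
theorem stmt14 {E : Type*} [NormedAddCommGroup E] [InnerProductSpace ℝ E] [CompleteSpace E]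
    (C : Set E) (hCne : C.Nonempty) (hCcl : IsClosed C) (hCcv : Convex ℝ C)
    (c : ℝ) (hc : c ∈ Set.Ioo (0 : ℝ) 1)
    (m : E) (hmC : m ∈ C) (hm : ∀ y ∈ C, ‖m‖ ≤ ‖y‖)
    (x₀ : E) (x : ℕ → E) (hx0 : x 0 = x₀)
    (hxC : ∀ n, x (n + 1) ∈ C)
    (hxproj : ∀ n, ∀ y ∈ C, dist ((1 - c) • x n) (x (n + 1)) ≤ dist ((1 - c) • x n) y) :
    (∀ n, ‖x n - m‖ ≤ (1 - c) ^ n * ‖x₀ - m‖) ∧ Tendsto x atTop (nhds m) :=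
  stmt14_general C hCcv c hc m hmC hm x₀ x hx0 hxC hxproj
end

section
/- Let x₀ ∈ ℝ, let α' ∈ (0, 1], and let β ∈ (0, 1). If x_{t-1} is distributed as gaussianReal (√α'·x₀) (1-α') and the forward transition kernel sends y to the measure gaussianReal (√(1-β)·y) β, then the resulting marginal distribution of x_t, namely the bind (gaussianReal (√α'·x₀) (1-α')).bind (fun y => gaussianReal (√(1-β)·y) β), equals gaussianReal (√(α'·(1-β))·x₀) (1 − α'·(1-β)). (Consistency of the forward Markov chain: composing the Gaussian perturbation kernel q(x_t | x_{t-1}) = N(√(1-β_t)·x_{t-1}, β_t) with the time-(t−1) marginal yields the time-t marginal with α_t = α_{t-1}·(1-β_t).) -/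
/-!
The kernel `y ↦ N(c y, w)` is the law of `c Y + Z` with `Z ~ N(0, w)` independent of `Y`, so
binding it against `Y ~ N(m, v)` is the convolution of the image `N(c m, c² v)` of `N(m, v)` under
`y ↦ c y` with `N(0, w)`, which is `N(c m, c² v + w)`. With `c = √(1 - β)`, `m = √α' x₀` and
`v = 1 - α'` this is the claimed marginal.
-/

open MeasureTheory ProbabilityTheory
open scoped NNReal

namespace MeasureTheory.Measure

variable {α β : Type*} [MeasurableSpace α] [MeasurableSpace β]

theorem bind_map_eq_bind_comp {γ : Type*} [MeasurableSpace γ] (μ : Measure α) {f : α → β}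
    {g : β → Measure γ} (hf : Measurable f) (hg : Measurable g) :
    (μ.map f).bind g = μ.bind (g ∘ f) := by
  rw [bind, bind, map_map hg hf]

variable {M : Type*} [AddMonoid M] [MeasurableSpace M] [MeasurableAdd₂ M]

theorem map_const_add_apply_eq_prod_mk (ν : Measure M) (y : M) {s : Set M}
    (hs : MeasurableSet s) :
    ν.map (y + ·) s = ν (Prod.mk y ⁻¹' ((fun p : M × M => p.1 + p.2) ⁻¹' s)) :=
  map_apply (measurable_const_add y) hs

theorem measurable_map_const_add (ν : Measure M) [SFinite ν] :
    Measurable fun y : M => ν.map (y + ·) := by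
  refine measurable_of_measurable_coe _ fun s hs => ?_
  simp_rw [map_const_add_apply_eq_prod_mk ν _ hs]
  exact measurable_measure_prodMk_left (measurable_add hs)

theorem bind_map_const_add (ρ ν : Measure M) [SFinite ν] :
    ρ.bind (fun y => ν.map (y + ·)) = ρ ∗ ν := by
  ext s hs
  rw [bind_apply hs (measurable_map_const_add ν).aemeasurable, conv, map_apply measurable_add hs,
    prod_apply (measurable_add hs)]
  simp_rw [map_const_add_apply_eq_prod_mk ν _ hs]

end MeasureTheory.Measure

theorem gaussianReal_bind_gaussianReal_const_mul (m c : ℝ) (v w : ℝ≥0) :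
    (gaussianReal m v).bind (fun y => gaussianReal (c * y) w) =
      gaussianReal (c * m) (.mk (c ^ 2) (sq_nonneg c) * v + w) := by
  have hkernel : (fun y => gaussianReal (c * y) w) =
      (fun z => (gaussianReal 0 w).map (z + ·)) ∘ (c * ·) := by
    ext1 y
    simp [gaussianReal_map_const_add]
  rw [hkernel, ← Measure.bind_map_eq_bind_comp _ (measurable_const_mul c)
      (Measure.measurable_map_const_add _), Measure.bind_map_const_add,
    gaussianReal_map_const_mul, gaussianReal_conv_gaussianReal, add_zero]

theorem stmt16_general (x₀ : ℝ) (α' β : NNReal) (hα1 : α' ≤ 1)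
    (hβ1 : β < 1) :
    (gaussianReal (Real.sqrt α' * x₀) (1 - α')).bind
        (fun y => gaussianReal (Real.sqrt (1 - (β : ℝ)) * y) β) =
      gaussianReal (Real.sqrt ((α' : ℝ) * (1 - (β : ℝ))) * x₀) (1 - α' * (1 - β)) := by
  rw [gaussianReal_bind_gaussianReal_const_mul]
  congr 1
  · rw [Real.sqrt_mul α'.coe_nonneg]
    ring
  · have hα'β : α' * (1 - β) ≤ 1 := mul_le_one' hα1 tsub_le_self
    ext
    rw [NNReal.coe_add, NNReal.coe_mul, NNReal.coe_mk, NNReal.coe_sub hα1, NNReal.coe_sub hα'β,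
      NNReal.coe_mul, NNReal.coe_sub hβ1.le, NNReal.coe_one,
      Real.sq_sqrt (sub_nonneg.2 (NNReal.coe_le_one.2 hβ1.le))]
    ring

/-- Consistency of the forward Markov chain of a diffusion model: composing the
Gaussian transition kernel `y ↦ N(√(1-β)·y, β)` with the time-(t−1) marginal
`N(√α'·x₀, 1-α')` yields the time-t marginal `N(√(α'(1-β))·x₀, 1 − α'(1-β))`. -/
theorem stmt16 (x₀ : ℝ) (α' β : NNReal) (hα0 : 0 < α') (hα1 : α' ≤ 1)
    (hβ0 : 0 < β) (hβ1 : β < 1) :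
    (gaussianReal (Real.sqrt α' * x₀) (1 - α')).bind
        (fun y => gaussianReal (Real.sqrt (1 - (β : ℝ)) * y) β) =
      gaussianReal (Real.sqrt ((α' : ℝ) * (1 - (β : ℝ))) * x₀) (1 - α' * (1 - β)) :=
  stmt16_general x₀ α' β hα1 hβ1
end

section
/- Let C ⊆ ℝ be a nonempty closed convex set, let c ∈ [0, 1], let γ ≥ 0, and let x ∈ ℝ satisfy |x| ≤ infDist(0, C). Let p be the point of C nearest to x. Then ∫ infDist((1-c)·x + √(2γ)·e, C)² d(gaussianReal 0 1)(e) ≥ ∫ infDist((1-c)·p + √(2γ)·e, C)² d(gaussianReal 0 1)(e); that is, the expected projection cost after one noisy PGDM update applied to the projected point is no larger than after the same update applied to the unprojected point. (One-dimensional expectation form of Theorem 1 with the Gaussian score.) -/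
/-!
If `0 ∈ C` then `x = p = 0`; otherwise `C` lies on one side of `0`, and after a reflection
`C ⊆ [a, ∞)` with `a = min C = infDist(0, C)`. Left of `a` the cost `z ↦ infDist(z, C)²` is
exactly `(a - z)²`. As the noise is symmetric, the expected cost at `t` is half the expected
symmetrized cost `infDist(t + w, C)² + infDist(t - w, C)²` at `w = s·e`, and the symmetrized
cost is antitone in `t ≤ a`: moving `t` right by `δ` lowers the exact term `(a - t + w)²` by
at least as much as the 1-Lipschitz term `infDist(t + w, C)²` can rise. Finally the nearest
point of `x` is `a`, and `(1 - c) x ≤ (1 - c) a ≤ a`.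
-/

open MeasureTheory Metric ProbabilityTheory Set

instance isNegInvariant_gaussianReal (v : NNReal) : (gaussianReal 0 v).IsNegInvariant :=
  ⟨by rw [Measure.neg_def, gaussianReal_map_neg, neg_zero]⟩

lemma infDist_neg_neg (z : ℝ) (C : Set ℝ) : infDist (-z) (-C) = infDist z C := by
  rw [← image_neg_eq_neg]
  exact infDist_image isometry_neg

section IsLeast

variable {C : Set ℝ} {a : ℝ}

lemma infDist_eq_sub_of_isLeast (hC : IsLeast C a) {s : ℝ} (hs : s ≤ a) :
    infDist s C = a - s := by
  refine le_antisymm ?_ ((le_infDist ⟨a, hC.1⟩).2 fun y hy => ?_)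
  · calc infDist s C ≤ dist s a := infDist_le_dist_of_mem hC.1
      _ = a - s := by rw [Real.dist_eq, abs_of_nonpos (by linarith)]; ring
  · rw [Real.dist_eq, abs_of_nonpos (by linarith [hC.2 hy])]
    linarith [hC.2 hy]

lemma eq_of_isLeast_of_dist_eq_infDist (hC : IsLeast C a) {x p : ℝ} (hx : x ≤ a)
    (hpC : p ∈ C) (hpd : dist x p = infDist x C) : p = a := by
  rw [infDist_eq_sub_of_isLeast hC hx, Real.dist_eq,
    abs_of_nonpos (by linarith [hC.2 hpC])] at hpd
  linarith

lemma IsClosed.isLeast_infDist_zero (hCcl : IsClosed C) (hCne : C.Nonempty)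
    (hC : C ⊆ Ici 0) : IsLeast C (infDist 0 C) := by
  have hbdd : BddBelow C := ⟨0, hC⟩
  have hleast := hCcl.isLeast_csInf hCne hbdd
  rwa [infDist_eq_sub_of_isLeast hleast (hC hleast.1), sub_zero]

lemma infDist_sq_symm_le_of_isLeast (hC : IsLeast C a) {t t' : ℝ} (htt : t ≤ t')
    (ht' : t' ≤ a) (w : ℝ) :
    infDist (t' + w) C ^ 2 + infDist (t' - w) C ^ 2 ≤
      infDist (t + w) C ^ 2 + infDist (t - w) C ^ 2 := by
  wlog hw : 0 ≤ w generalizing w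
  · have := this (-w) (by linarith)
    rw [← sub_eq_add_neg, ← sub_eq_add_neg, sub_neg_eq_add, sub_neg_eq_add] at this
    linarith
  have hexact : ∀ s ≤ a, infDist (s - w) C = a - s + w := fun s hs => by
    rw [infDist_eq_sub_of_isLeast hC (by linarith)]; ring
  have hbound : ∀ s ≤ a, infDist (s + w) C ≤ a - s + w := fun s hs => by
    calc infDist (s + w) C ≤ dist (s + w) a := infDist_le_dist_of_mem hC.1
      _ ≤ a - s + w := by rw [Real.dist_eq]; exact abs_le.2 ⟨by linarith, by linarith⟩
  have hlip : infDist (t' + w) C ≤ infDist (t + w) C + (t' - t) := by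
    calc infDist (t' + w) C ≤ infDist (t + w) C + dist (t' + w) (t + w) :=
          infDist_le_infDist_add_dist
      _ = infDist (t + w) C + (t' - t) := by
          rw [Real.dist_eq, abs_of_nonneg (by linarith)]; ring_nf
  rw [hexact t (by linarith), hexact t' ht']
  nlinarith [hbound t (by linarith), hbound t' ht', infDist_nonneg (x := t + w) (s := C),
    infDist_nonneg (x := t' + w) (s := C)]

end IsLeast

lemma Convex.subset_Ici_or_subset_Iic_of_notMem {C : Set ℝ} (hCcv : Convex ℝ C)
    (h0 : (0 : ℝ) ∉ C) : C ⊆ Ici 0 ∨ C ⊆ Iic 0 := by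
  by_contra h
  simp only [not_or, not_subset, mem_Ici, mem_Iic, not_le] at h
  obtain ⟨⟨y, hyC, hy⟩, ⟨z, hzC, hz⟩⟩ := h
  exact h0 (hCcv.ordConnected.out hyC hzC ⟨hy.le, hz.le⟩)

section SymmetricNoise

variable {ν : Measure ℝ}

lemma integrable_infDist_sq_comp_affine [IsFiniteMeasure ν] (hν : MemLp id 2 ν)
    (C : Set ℝ) (t s : ℝ) : Integrable (fun e => infDist (t + s * e) C ^ 2) ν := by
  have haffine : MemLp (fun e => t + s * e) 2 ν :=
    (memLp_const t).add (hν.const_mul s)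
  refine MemLp.integrable_sq (((memLp_const (infDist 0 C)).add haffine.norm).mono
    (by fun_prop) (ae_of_all _ fun e => ?_))
  have h := infDist_le_infDist_add_dist (x := t + s * e) (y := 0) (s := C)
  rw [dist_zero_right] at h
  rw [Real.norm_of_nonneg infDist_nonneg]
  exact h.trans (le_abs_self _)

lemma integral_comp_affine_le_of_symm_le [ν.IsNegInvariant] {f : ℝ → ℝ} {u v s : ℝ}
    (hu : Integrable (fun e => f (u + s * e)) ν) (hv : Integrable (fun e => f (v + s * e)) ν)
    (hsymm : ∀ w, f (v + w) + f (v - w) ≤ f (u + w) + f (u - w)) :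
    ∫ e, f (v + s * e) ∂ν ≤ ∫ e, f (u + s * e) ∂ν := by
  have hneg : ∀ y, ∫ e, f (y - s * e) ∂ν = ∫ e, f (y + s * e) ∂ν := fun y => by
    simpa only [mul_neg, ← sub_eq_add_neg] using integral_neg_eq_self (fun e => f (y + s * e)) ν
  have hint : ∀ y, Integrable (fun e => f (y + s * e)) ν →
      Integrable (fun e => f (y - s * e)) ν := fun y hy => by
    simpa only [mul_neg, ← sub_eq_add_neg] using hy.comp_neg
  have hmono := integral_mono (hv.add (hint v hv)) (hu.add (hint u hu)) fun e => hsymm (s * e)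
  simp only [Pi.add_apply] at hmono
  rw [integral_add hv (hint v hv), integral_add hu (hint u hu), hneg, hneg] at hmono
  linarith

lemma integral_infDist_sq_neg_neg [ν.IsNegInvariant] (C : Set ℝ) (t s : ℝ) :
    ∫ e, infDist (-t + s * e) (-C) ^ 2 ∂ν = ∫ e, infDist (t + s * e) C ^ 2 ∂ν := by
  rw [← integral_neg_eq_self]
  simp only [show ∀ e, -t + s * -e = -(t + s * e) from fun e => by ring, infDist_neg_neg]

lemma integral_infDist_sq_update_le_of_isLeast [IsFiniteMeasure ν] [ν.IsNegInvariant]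
    (hν : MemLp id 2 ν) {C : Set ℝ} {a : ℝ} (hC : IsLeast C a) {c : ℝ} (hc : c ∈ Icc (0 : ℝ) 1)
    {x p : ℝ} (hx : |x| ≤ a) (hpC : p ∈ C) (hpd : dist x p = infDist x C) (s : ℝ) :
    ∫ e, infDist ((1 - c) * p + s * e) C ^ 2 ∂ν ≤
      ∫ e, infDist ((1 - c) * x + s * e) C ^ 2 ∂ν := by
  obtain ⟨hc0, hc1⟩ := hc
  have hxa : x ≤ a := (le_abs_self x).trans hx
  have ha : 0 ≤ a := (abs_nonneg x).trans hx
  rw [eq_of_isLeast_of_dist_eq_infDist hC hxa hpC hpd]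
  refine integral_comp_affine_le_of_symm_le (f := fun z => infDist z C ^ 2) (integrable_infDist_sq_comp_affine hν C _ s)
    (integrable_infDist_sq_comp_affine hν C _ s) fun w => ?_
  exact infDist_sq_symm_le_of_isLeast hC
    (mul_le_mul_of_nonneg_left hxa (by linarith)) (by nlinarith) w

end SymmetricNoise

theorem stmt18_general (C : Set ℝ) (hCne : C.Nonempty) (hCcl : IsClosed C) (hCcv : Convex ℝ C)
    (c : ℝ) (hc : c ∈ Set.Icc (0 : ℝ) 1) (γ : ℝ)
    (x : ℝ) (hx : |x| ≤ infDist 0 C)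
    (p : ℝ) (hpC : p ∈ C) (hpd : dist x p = infDist x C) :
    ∫ e, infDist ((1 - c) * x + Real.sqrt (2 * γ) * e) C ^ 2 ∂(gaussianReal 0 1) ≥
      ∫ e, infDist ((1 - c) * p + Real.sqrt (2 * γ) * e) C ^ 2 ∂(gaussianReal 0 1) := by
  have hν : MemLp id 2 (gaussianReal 0 1) := memLp_id_gaussianReal 2
  by_cases h0 : (0 : ℝ) ∈ C
  · have hx0 : x = 0 := abs_nonpos_iff.1 (hx.trans_eq (infDist_zero_of_mem h0))
    subst hx0
    rw [infDist_zero_of_mem h0, dist_eq_zero] at hpd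
    rw [← hpd]
  rcases hCcv.subset_Ici_or_subset_Iic_of_notMem h0 with hCpos | hCneg
  · exact integral_infDist_sq_update_le_of_isLeast hν (hCcl.isLeast_infDist_zero hCne hCpos)
      hc hx hpC hpd _
  · have hleast : IsLeast (-C) (infDist 0 (-C)) :=
      hCcl.neg.isLeast_infDist_zero hCne.neg fun y hy => mem_Ici.2 (neg_nonpos.1 (hCneg hy))
    rw [← neg_zero, infDist_neg_neg] at hleast
    have := integral_infDist_sq_update_le_of_isLeast hν hleast hc (x := -x) (p := -p)
      (by rwa [abs_neg]) (neg_mem_neg.2 hpC) (by rw [dist_neg_neg, infDist_neg_neg, hpd])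
      (Real.sqrt (2 * γ))
    simpa only [mul_neg, integral_infDist_sq_neg_neg] using this

/-- One-dimensional expectation form of Theorem 1 with the Gaussian score: if
`|x| ≤ infDist 0 C` and `p` is the nearest point of the nonempty closed convex
set `C ⊆ ℝ` to `x`, then the expected projection cost after one noisy PGDM update
applied to `p` is no larger than after the same update applied to `x`. -/
theorem stmt18 (C : Set ℝ) (hCne : C.Nonempty) (hCcl : IsClosed C) (hCcv : Convex ℝ C)
    (c : ℝ) (hc : c ∈ Set.Icc (0 : ℝ) 1) (γ : ℝ) (hγ : 0 ≤ γ)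
    (x : ℝ) (hx : |x| ≤ infDist 0 C)
    (p : ℝ) (hpC : p ∈ C) (hpd : dist x p = infDist x C) :
    ∫ e, infDist ((1 - c) * x + Real.sqrt (2 * γ) * e) C ^ 2 ∂(gaussianReal 0 1) ≥
      ∫ e, infDist ((1 - c) * p + Real.sqrt (2 * γ) * e) C ^ 2 ∂(gaussianReal 0 1) :=
  stmt18_general C hCne hCcl hCcv c hc γ x hx p hpC hpd
end
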